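/- For all real numbers x_1, x_2 and every λ ∈ [0,1], ω_2(λx_1 + (1−λ)x_2) ≤ λ·ω_2(x_1) + (1−λ)·ω_2(x_2) + ω_2(λ)·|x_1 − x_2|. -/

import Mathlib

/-!
Write `T = ω₂`, so that `T x = ‖x‖ + T (2x) / 2`, `T` is `1`-periodic and even, and
`T (λ/2) = λ/2 + T λ / 2` for `λ ∈ [0, 1]`.

First, the midpoint inequality `T ((x+y)/2) ≤ (T x + T y)/2 + |x-y|/2`. With `s` the midpoint and
`h ∈ [0, 1/2]` the half-distance, the gap `(T (s+h) + T (s-h))/2 + h - T s` equals an explicit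
piecewise linear term plus half the gap at `(2s, 2h)`, or at `(2s, 1 - 2h)` when `h ≥ 1/4`. A
piecewise linear `midpointReserve ≥ 0` is chosen so that `reserve - gap` at least halves along this
recursion; being bounded, `reserve - gap` is then `≤ 0`.

Then the theorem holds for every bounded `f` satisfying the midpoint inequality: the defect of the
inequality at `(λ, x, y)` is at most half the defect at `(2λ, x, y)`, and the defect at `λ` equals
the defect at `1 - λ` with `x, y` swapped, so the same halving argument applies.
-/

/-- Distance from `x` to the nearest integer: `‖x‖`. -/
noncomputable def nearestIntDist (x : ℝ) : ℝ := |x - (round x : ℝ)|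

/-- The generalized Takagi function
`ω_m(x) = ∑_{k=0}^∞ m^{-k} ‖m^k x‖_{1/m}`, where `‖·‖_α = min{‖·‖, α}`. -/
noncomputable def omegaT (m : ℕ) (x : ℝ) : ℝ :=
  ∑' k : ℕ, ((m : ℝ) ^ k)⁻¹ * min (nearestIntDist ((m : ℝ) ^ k * x)) (1 / m)

open Filter Topology

lemma nearestIntDist_eq_norm (x : ℝ) : nearestIntDist x = ‖(x : UnitAddCircle)‖ :=
  UnitAddCircle.norm_eq.symm

lemma nearestIntDist_nonneg (x : ℝ) : 0 ≤ nearestIntDist x := abs_nonneg _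

lemma nearestIntDist_le_half (x : ℝ) : nearestIntDist x ≤ 1 / 2 := by
  simpa [nearestIntDist_eq_norm] using
    AddCircle.norm_le_half_period (p := (1 : ℝ)) (x := (x : UnitAddCircle)) one_ne_zero

lemma nearestIntDist_add_intCast (x : ℝ) (n : ℤ) : nearestIntDist (x + n) = nearestIntDist x := by
  simp [nearestIntDist_eq_norm]

lemma nearestIntDist_neg (x : ℝ) : nearestIntDist (-x) = nearestIntDist x := by
  simp [nearestIntDist_eq_norm]

lemma nearestIntDist_add_le (x y : ℝ) :
    nearestIntDist (x + y) ≤ nearestIntDist x + nearestIntDist y := by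
  simpa [nearestIntDist_eq_norm] using norm_add_le (x : UnitAddCircle) y

lemma nearestIntDist_eq_abs {x : ℝ} (hx : |x| ≤ 1 / 2) : nearestIntDist x = |x| := by
  rw [nearestIntDist_eq_norm]
  exact (AddCircle.norm_coe_eq_abs_iff (p := (1 : ℝ)) one_ne_zero).2 (by simpa using hx)

lemma nearestIntDist_eq_min {x : ℝ} (h₀ : 0 ≤ x) (h₁ : x ≤ 1) :
    nearestIntDist x = min x (1 - x) := by
  rcases le_total x (1 / 2) with hx | hx
  · rw [nearestIntDist_eq_abs (by rwa [abs_of_nonneg h₀]), abs_of_nonneg h₀,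
      min_eq_left (by linarith)]
  · have hx' : |x - 1| ≤ 1 / 2 := by rw [abs_le]; constructor <;> linarith
    have hper : nearestIntDist x = nearestIntDist (x - 1) := by
      simpa using nearestIntDist_add_intCast (x - 1) 1
    rw [hper, nearestIntDist_eq_abs hx', abs_of_nonpos (by linarith), min_eq_right (by linarith)]
    ring

lemma sub_round_eq_nearestIntDist_or (x : ℝ) :
    x - round x = nearestIntDist x ∨ x - round x = -nearestIntDist x := by
  rcases abs_choice (x - round x) with h | h
  · exact Or.inl h.symm
  · exact Or.inr (by rw [nearestIntDist, h, neg_neg])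

lemma nearestIntDist_mul_add_eq_sub_round (n : ℤ) (x y : ℝ) :
    nearestIntDist (n * x + y) = nearestIntDist (n * (x - round x) + y) := by
  rw [← nearestIntDist_add_intCast (n * (x - round x) + y) (n * round x)]
  push_cast
  ring_nf

lemma nearestIntDist_two_mul (x : ℝ) :
    nearestIntDist (2 * x) = min (2 * nearestIntDist x) (1 - 2 * nearestIntDist x) := by
  have hd : nearestIntDist (2 * x) = nearestIntDist (2 * nearestIntDist x) := by
    have := nearestIntDist_mul_add_eq_sub_round 2 x 0
    simp only [Int.cast_ofNat, add_zero] at this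
    rcases sub_round_eq_nearestIntDist_or x with h | h <;> rw [this, h]
    rw [mul_neg, nearestIntDist_neg]
  rw [hd, nearestIntDist_eq_min (by linarith [nearestIntDist_nonneg x])
    (by linarith [nearestIntDist_le_half x])]

lemma nearestIntDist_add_add_sub (s h : ℝ) :
    nearestIntDist (s + h) + nearestIntDist (s - h)
      = nearestIntDist (nearestIntDist s + h) + nearestIntDist (nearestIntDist s - h) := by
  have hp := nearestIntDist_mul_add_eq_sub_round 1 s h
  have hm := nearestIntDist_mul_add_eq_sub_round 1 s (-h)
  simp only [Int.cast_one, one_mul, ← sub_eq_add_neg] at hp hm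
  rcases sub_round_eq_nearestIntDist_or s with e | e <;> rw [hp, hm, e]
  rw [← nearestIntDist_neg (-_ + h), ← nearestIntDist_neg (-_ - h), add_comm]
  ring_nf

noncomputable def takagi (x : ℝ) : ℝ := ∑' k : ℕ, (2 ^ k)⁻¹ * nearestIntDist (2 ^ k * x)

lemma takagi_term_nonneg (x : ℝ) (k : ℕ) : 0 ≤ (2 ^ k : ℝ)⁻¹ * nearestIntDist (2 ^ k * x) :=
  mul_nonneg (by positivity) (nearestIntDist_nonneg _)

lemma takagi_term_le (x : ℝ) (k : ℕ) :
    (2 ^ k : ℝ)⁻¹ * nearestIntDist (2 ^ k * x) ≤ (1 / 2) ^ k * (1 / 2) := by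
  rw [one_div, inv_pow]
  exact mul_le_mul_of_nonneg_left (by simpa using nearestIntDist_le_half _) (by positivity)

lemma summable_takagi (x : ℝ) :
    Summable fun k : ℕ => (2 ^ k : ℝ)⁻¹ * nearestIntDist (2 ^ k * x) :=
  .of_nonneg_of_le (takagi_term_nonneg x) (takagi_term_le x) (summable_geometric_two.mul_right _)

lemma omegaT_two_eq_takagi (x : ℝ) : omegaT 2 x = takagi x := by
  refine tsum_congr fun k => ?_
  rw [min_eq_left (by simpa using nearestIntDist_le_half _), Nat.cast_ofNat]

lemma takagi_nonneg (x : ℝ) : 0 ≤ takagi x := tsum_nonneg (takagi_term_nonneg x)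

lemma takagi_le_one (x : ℝ) : takagi x ≤ 1 := by
  calc takagi x ≤ ∑' k : ℕ, (1 / 2 : ℝ) ^ k * (1 / 2) :=
        (summable_takagi x).tsum_le_tsum (takagi_term_le x) (summable_geometric_two.mul_right _)
    _ = 1 := by rw [tsum_mul_right, tsum_geometric_two]; norm_num

lemma takagi_eq_add_half (x : ℝ) : takagi x = nearestIntDist x + takagi (2 * x) / 2 := by
  rw [takagi, (summable_takagi x).tsum_eq_zero_add, takagi, ← tsum_div_const]
  simp only [pow_zero, inv_one, one_mul, pow_succ]
  congr 1
  refine tsum_congr fun k => ?_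
  field_simp

lemma takagi_add_intCast (x : ℝ) (n : ℤ) : takagi (x + n) = takagi x := by
  refine tsum_congr fun k => ?_
  rw [mul_add, ← nearestIntDist_add_intCast (2 ^ k * x) (2 ^ k * n)]
  push_cast
  ring_nf

lemma takagi_neg (x : ℝ) : takagi (-x) = takagi x := by
  refine tsum_congr fun k => ?_
  rw [mul_neg, nearestIntDist_neg]

lemma takagi_add_le (x y : ℝ) : takagi (x + y) ≤ takagi x + takagi y := by
  rw [takagi, takagi, takagi, ← (summable_takagi x).tsum_add (summable_takagi y)]
  refine (summable_takagi _).tsum_le_tsum (fun k => ?_)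
    ((summable_takagi x).add (summable_takagi y))
  rw [← mul_add, mul_add]
  exact mul_le_mul_of_nonneg_left (nearestIntDist_add_le _ _) (by positivity)

lemma takagi_one_sub (x : ℝ) : takagi (1 - x) = takagi x := by
  simpa [← sub_eq_neg_add, takagi_neg] using takagi_add_intCast (-x) 1

lemma abs_takagi_le_one (x : ℝ) : |takagi x| ≤ 1 :=
  abs_le.2 ⟨by linarith [takagi_nonneg x], takagi_le_one x⟩

lemma takagi_half {x : ℝ} (h₀ : 0 ≤ x) (h₁ : x ≤ 1) : takagi (x / 2) = x / 2 + takagi x / 2 := by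
  rw [takagi_eq_add_half, mul_div_cancel₀ x two_ne_zero,
    nearestIntDist_eq_abs (by rw [abs_of_nonneg (by linarith)]; linarith),
    abs_of_nonneg (by linarith)]

lemma nonpos_of_forall_exists_le_half {α : Type*} {S : Set α} {φ : α → ℝ} {M : ℝ}
    (hM : ∀ a ∈ S, φ a ≤ M) (hstep : ∀ a ∈ S, ∃ b ∈ S, φ a ≤ φ b / 2) {a : α} (ha : a ∈ S) :
    φ a ≤ 0 := by
  have hbound : ∀ n : ℕ, ∀ a ∈ S, φ a ≤ M / 2 ^ n := by
    intro n
    induction n with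
    | zero => simpa using hM
    | succ n ih =>
      intro a ha
      obtain ⟨b, hb, hab⟩ := hstep a ha
      calc φ a ≤ φ b / 2 := hab
        _ ≤ M / 2 ^ n / 2 := by gcongr; exact ih b hb
        _ = M / 2 ^ (n + 1) := by rw [pow_succ, div_div]
  have hlim : Tendsto (fun n : ℕ => M / 2 ^ n) atTop (𝓝 0) :=
    tendsto_const_nhds.div_atTop (tendsto_pow_atTop_atTop_of_one_lt one_lt_two)
  exact ge_of_tendsto' hlim fun n => hbound n a ha

noncomputable def takagiMidpointGap (s h : ℝ) : ℝ :=
  (takagi (s + h) + takagi (s - h)) / 2 + h - takagi s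

noncomputable def midpointReserve (s h : ℝ) : ℝ :=
  max 0 (max (nearestIntDist (2 * h) / 2 - (1 / 2 - nearestIntDist s))
    (2 * h - 2 * nearestIntDist s))

lemma takagiMidpointGap_eq (s h : ℝ) :
    takagiMidpointGap s h = (nearestIntDist (s + h) + nearestIntDist (s - h)) / 2
      - nearestIntDist s + takagiMidpointGap (2 * s) (2 * h) / 2 := by
  simp only [takagiMidpointGap]
  rw [takagi_eq_add_half (s + h), takagi_eq_add_half (s - h), takagi_eq_add_half s,
    mul_add, mul_sub]
  ring

lemma takagiMidpointGap_one_sub (s h : ℝ) :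
    takagiMidpointGap s (1 - h) = takagiMidpointGap s h + 1 - 2 * h := by
  have hp : takagi (s + (1 - h)) = takagi (s - h) := by
    simpa [add_sub_left_comm, add_comm] using takagi_add_intCast (s - h) 1
  have hm : takagi (s - (1 - h)) = takagi (s + h) := by
    simpa [sub_sub_eq_add_sub] using (takagi_add_intCast (s + h - 1) 1).symm
  simp only [takagiMidpointGap]
  rw [hp, hm]
  ring

lemma neg_one_le_takagiMidpointGap {h : ℝ} (s : ℝ) (h₀ : 0 ≤ h) : -1 ≤ takagiMidpointGap s h := by
  have := takagi_nonneg (s + h); have := takagi_nonneg (s - h); have := takagi_le_one s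
  simp only [takagiMidpointGap]
  linarith

lemma midpointReserve_le_one {h : ℝ} (s : ℝ) (hh : h ≤ 1 / 2) : midpointReserve s h ≤ 1 := by
  have := nearestIntDist_le_half (2 * h); have := nearestIntDist_nonneg s
  have := nearestIntDist_le_half s
  exact max_le (by norm_num) (max_le (by linarith) (by linarith))

lemma le_midpointReserve (s h : ℝ) :
    0 ≤ midpointReserve s h ∧
      nearestIntDist (2 * h) / 2 - (1 / 2 - nearestIntDist s) ≤ midpointReserve s h ∧
      2 * h - 2 * nearestIntDist s ≤ midpointReserve s h :=
  ⟨le_max_left _ _, (le_max_left _ _).trans (le_max_right _ _),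
    (le_max_right _ _).trans (le_max_right _ _)⟩

lemma midpointReserve_le_of_le_quarter {s h : ℝ} (h₀ : 0 ≤ h) (hh : h ≤ 1 / 4) :
    midpointReserve s h ≤ (nearestIntDist (s + h) + nearestIntDist (s - h)) / 2
      - nearestIntDist s + midpointReserve (2 * s) (2 * h) / 2 := by
  have r₀ := nearestIntDist_nonneg s
  have r₁ := nearestIntDist_le_half s
  obtain ⟨g₀, g₁, g₂⟩ := le_midpointReserve (2 * s) (2 * h)
  rw [nearestIntDist_two_mul s] at g₁ g₂
  rw [← mul_assoc, nearestIntDist_eq_min (x := 2 * 2 * h) (by linarith) (by linarith)] at g₁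
  rw [midpointReserve, nearestIntDist_add_add_sub,
    nearestIntDist_eq_abs (x := 2 * h) (by rw [abs_of_nonneg (by linarith)]; linarith),
    abs_of_nonneg (by linarith : 0 ≤ 2 * h)]
  generalize midpointReserve (2 * s) (2 * h) = g at *
  generalize nearestIntDist s = r at *
  rw [nearestIntDist_eq_min (by linarith) (by linarith),
    nearestIntDist_eq_abs (by rw [abs_le]; constructor <;> linarith)]
  rcases abs_cases (r - h) with ⟨e₁, c₁⟩ | ⟨e₁, c₁⟩ <;>
  rcases min_cases (r + h) (1 - (r + h)) with ⟨e₂, c₂⟩ | ⟨e₂, c₂⟩ <;>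
  rcases min_cases (2 * 2 * h) (1 - 2 * 2 * h) with ⟨e₃, c₃⟩ | ⟨e₃, c₃⟩ <;>
  rcases min_cases (2 * r) (1 - 2 * r) with ⟨e₄, c₄⟩ | ⟨e₄, c₄⟩ <;>
  simp only [e₁, e₂, e₃, e₄] at * <;>
  exact max_le (by linarith) (max_le (by linarith) (by linarith))

lemma midpointReserve_le_of_quarter_le {s h : ℝ} (hh₀ : 1 / 4 ≤ h) (hh : h ≤ 1 / 2) :
    midpointReserve s h ≤ (nearestIntDist (s + h) + nearestIntDist (s - h)) / 2
      - nearestIntDist s + (4 * h - 1) / 2 + midpointReserve (2 * s) (1 - 2 * h) / 2 := by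
  have r₀ := nearestIntDist_nonneg s
  have r₁ := nearestIntDist_le_half s
  obtain ⟨g₀, g₁, g₂⟩ := le_midpointReserve (2 * s) (1 - 2 * h)
  rw [nearestIntDist_two_mul s] at g₁ g₂
  rw [nearestIntDist_eq_min (x := 2 * (1 - 2 * h)) (by linarith) (by linarith)] at g₁
  rw [midpointReserve, nearestIntDist_add_add_sub,
    nearestIntDist_eq_min (x := 2 * h) (by linarith) (by linarith),
    min_eq_right (by linarith : 1 - 2 * h ≤ 2 * h)]
  generalize midpointReserve (2 * s) (1 - 2 * h) = g at *
  generalize nearestIntDist s = r at *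
  rw [nearestIntDist_eq_min (by linarith) (by linarith),
    nearestIntDist_eq_abs (by rw [abs_le]; constructor <;> linarith)]
  rcases abs_cases (r - h) with ⟨e₁, c₁⟩ | ⟨e₁, c₁⟩ <;>
  rcases min_cases (r + h) (1 - (r + h)) with ⟨e₂, c₂⟩ | ⟨e₂, c₂⟩ <;>
  rcases min_cases (2 * (1 - 2 * h)) (1 - 2 * (1 - 2 * h)) with ⟨e₃, c₃⟩ | ⟨e₃, c₃⟩ <;>
  rcases min_cases (2 * r) (1 - 2 * r) with ⟨e₄, c₄⟩ | ⟨e₄, c₄⟩ <;>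
  simp only [e₁, e₂, e₃, e₄] at * <;>
  exact max_le (by linarith) (max_le (by linarith) (by linarith))

lemma midpointReserve_le_takagiMidpointGap {s h : ℝ} (h₀ : 0 ≤ h) (hh : h ≤ 1 / 2) :
    midpointReserve s h ≤ takagiMidpointGap s h := by
  have hbound : ∀ p ∈ {p : ℝ × ℝ | p.2 ∈ Set.Icc 0 (1 / 2)},
      midpointReserve p.1 p.2 - takagiMidpointGap p.1 p.2 ≤ 2 := fun p hp => by
    linarith [midpointReserve_le_one p.1 hp.2, neg_one_le_takagiMidpointGap p.1 hp.1]
  have hstep : ∀ p ∈ {p : ℝ × ℝ | p.2 ∈ Set.Icc 0 (1 / 2)},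
      ∃ q ∈ {p : ℝ × ℝ | p.2 ∈ Set.Icc 0 (1 / 2)},
        midpointReserve p.1 p.2 - takagiMidpointGap p.1 p.2
          ≤ (midpointReserve q.1 q.2 - takagiMidpointGap q.1 q.2) / 2 := by
    rintro ⟨s, h⟩ ⟨h₀, hh⟩
    rcases le_total h (1 / 4) with hq | hq
    · refine ⟨(2 * s, 2 * h), ⟨by dsimp only; linarith, by dsimp only; linarith⟩, ?_⟩
      linarith [midpointReserve_le_of_le_quarter (s := s) h₀ hq, takagiMidpointGap_eq s h]
    · refine ⟨(2 * s, 1 - 2 * h), ⟨by dsimp only; linarith, by dsimp only; linarith⟩, ?_⟩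
      have hgap := takagiMidpointGap_one_sub (2 * s) (1 - 2 * h)
      rw [sub_sub_cancel] at hgap
      linarith [midpointReserve_le_of_quarter_le (s := s) hq hh, takagiMidpointGap_eq s h]
  linarith [nonpos_of_forall_exists_le_half hbound hstep (a := (s, h)) ⟨h₀, hh⟩]

lemma takagiMidpointGap_nonneg (s : ℝ) {h : ℝ} (h₀ : 0 ≤ h) : 0 ≤ takagiMidpointGap s h := by
  rcases le_total h (1 / 2) with hh | hh
  · exact (le_midpointReserve s h).1.trans (midpointReserve_le_takagiMidpointGap h₀ hh)
  · have hsub : takagi (2 * s) ≤ takagi (s + h) + takagi (s - h) := by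
      simpa [two_mul] using takagi_add_le (s + h) (s - h)
    have := takagi_eq_add_half s
    have := nearestIntDist_le_half s
    simp only [takagiMidpointGap]
    linarith

lemma takagi_midpoint_le (x y : ℝ) :
    takagi ((x + y) / 2) ≤ (takagi x + takagi y) / 2 + |x - y| / 2 := by
  wlog hxy : y ≤ x generalizing x y
  · simpa [add_comm, abs_sub_comm] using this y x (le_of_not_ge hxy)
  have := takagiMidpointGap_nonneg ((x + y) / 2) (h := (x - y) / 2) (by linarith)
  rw [takagiMidpointGap, show (x + y) / 2 + (x - y) / 2 = x by ring,
    show (x + y) / 2 - (x - y) / 2 = y by ring] at this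
  rw [abs_of_nonneg (by linarith : 0 ≤ x - y)]
  linarith

section ApproximateConvexity

variable {f : ℝ → ℝ}

noncomputable def takagiConvexityDefect (f : ℝ → ℝ) (l x y : ℝ) : ℝ :=
  f (l * x + (1 - l) * y) - (l * f x + (1 - l) * f y + takagi l * |x - y|)

lemma takagiConvexityDefect_one_sub (l x y : ℝ) :
    takagiConvexityDefect f (1 - l) x y = takagiConvexityDefect f l y x := by
  simp only [takagiConvexityDefect, takagi_one_sub, abs_sub_comm x y]
  ring_nf

lemma takagiConvexityDefect_half_le
    (hmid : ∀ x y, f ((x + y) / 2) ≤ (f x + f y) / 2 + |x - y| / 2)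
    {l : ℝ} (h₀ : 0 ≤ l) (h₁ : l ≤ 1) (x y : ℝ) :
    takagiConvexityDefect f (l / 2) x y ≤ takagiConvexityDefect f l x y / 2 := by
  have hz := hmid (l * x + (1 - l) * y) y
  rw [show l * x + (1 - l) * y - y = l * (x - y) by ring, abs_mul, abs_of_nonneg h₀,
    show (l * x + (1 - l) * y + y) / 2 = l / 2 * x + (1 - l / 2) * y by ring] at hz
  simp only [takagiConvexityDefect, takagi_half h₀ h₁]
  linarith

lemma takagiConvexityDefect_le {M : ℝ} (hf : ∀ x, |f x| ≤ M)
    {l : ℝ} (h₀ : 0 ≤ l) (h₁ : l ≤ 1) (x y : ℝ) :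
    takagiConvexityDefect f l x y ≤ 2 * M := by
  have hx := abs_le.1 (hf x); have hy := abs_le.1 (hf y)
  have hz := abs_le.1 (hf (l * x + (1 - l) * y))
  have hT := mul_nonneg (takagi_nonneg l) (abs_nonneg (x - y))
  simp only [takagiConvexityDefect]
  nlinarith

theorem le_convexComb_add_takagi_of_midpoint_le {M : ℝ} (hf : ∀ x, |f x| ≤ M)
    (hmid : ∀ x y, f ((x + y) / 2) ≤ (f x + f y) / 2 + |x - y| / 2)
    {l : ℝ} (hl : l ∈ Set.Icc (0 : ℝ) 1) (x y : ℝ) :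
    f (l * x + (1 - l) * y) ≤ l * f x + (1 - l) * f y + takagi l * |x - y| := by
  have hbound : ∀ p ∈ {p : ℝ × ℝ × ℝ | p.1 ∈ Set.Icc (0 : ℝ) 1},
      takagiConvexityDefect f p.1 p.2.1 p.2.2 ≤ 2 * M := fun p hp =>
    takagiConvexityDefect_le hf hp.1 hp.2 _ _
  have hstep : ∀ p ∈ {p : ℝ × ℝ × ℝ | p.1 ∈ Set.Icc (0 : ℝ) 1},
      ∃ q ∈ {p : ℝ × ℝ × ℝ | p.1 ∈ Set.Icc (0 : ℝ) 1},
        takagiConvexityDefect f p.1 p.2.1 p.2.2 ≤ takagiConvexityDefect f q.1 q.2.1 q.2.2 / 2 := by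
    rintro ⟨l, x, y⟩ ⟨h₀, h₁⟩
    rcases le_total l (1 / 2) with hl | hl
    · refine ⟨(2 * l, x, y), ⟨by dsimp only; linarith, by dsimp only; linarith⟩, ?_⟩
      simpa using takagiConvexityDefect_half_le hmid (l := 2 * l) (by linarith) (by linarith) x y
    · refine ⟨(2 * (1 - l), y, x), ⟨by dsimp only; linarith, by dsimp only; linarith⟩, ?_⟩
      have := takagiConvexityDefect_half_le hmid (l := 2 * (1 - l)) (by linarith) (by linarith) y x
      rwa [mul_div_cancel_left₀ _ two_ne_zero, ← takagiConvexityDefect_one_sub, sub_sub_cancel]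
        at this
  have := nonpos_of_forall_exists_le_half hbound hstep (a := (l, x, y)) hl
  simp only [takagiConvexityDefect] at this
  linarith

end ApproximateConvexity

theorem stmt4 (x₁ x₂ : ℝ) {lam : ℝ} (hlam : lam ∈ Set.Icc (0 : ℝ) 1) :
    omegaT 2 (lam * x₁ + (1 - lam) * x₂)
      ≤ lam * omegaT 2 x₁ + (1 - lam) * omegaT 2 x₂
        + omegaT 2 lam * |x₁ - x₂| := by
  simp only [omegaT_two_eq_takagi]
  exact le_convexComb_add_takagi_of_midpoint_le abs_takagi_le_one takagi_midpoint_le hlam x₁ x₂
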